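/- arXiv:2305.03213 — 3 statements merged into one kernel-verified Lean document; each statement's English description precedes it below -/
import Mathlib

section
/- Let N, N' be lattices, c ∈ N ⊗ C, c' ∈ N' ⊗ C. A superalgebra map φ* : C[M'][ξ'] → C[M][ξ] (M = N^*, M' = (N')^*) is a morphism of Hopf superalgebras (for the supertorus Hopf structures determined by c and c') if and only if: (i) there is a lattice map φ̄* : M' → M with φ*(x^{m'}) = x^{φ̄*(m')}; (ii) φ*(ξ') = aξ for some a ∈ C; and (iii) ⟨φ̄*(m'), c⟩ = a²⟨m', c'⟩ for all m' ∈ M', i.e. φ̄_C(c) = a²c' where φ̄ is the dual map N → N'. -/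
noncomputable section

/-- Model of `ℂ[M][ξ]`: basis indexed by `M × ZMod 2` (monomial and parity). -/
abbrev SupA (M : Type*) := (M × ZMod 2) →₀ ℂ

/-- Model of `ℂ[M][ξ] ⊗ ℂ[M][ξ]`. -/
abbrev SupL2 (M : Type*) := ((M × M) × (ZMod 2 × ZMod 2)) →₀ ℂ

/-- The supercommutative product of two basis elements of `ℂ[M][ξ]` (`ξ² = 0`). -/
def mulB {M : Type*} [AddCommGroup M] (k k' : M × ZMod 2) : SupA M :=
  if k.2 = 1 ∧ k'.2 = 1 then 0 else Finsupp.single (k.1 + k'.1, k.2 + k'.2) 1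

/-- The multiplication of `ℂ[M][ξ]` as a bilinear map. -/
def mulA {M : Type*} [AddCommGroup M] : SupA M →ₗ[ℂ] SupA M →ₗ[ℂ] SupA M :=
  Finsupp.lift (SupA M →ₗ[ℂ] SupA M) ℂ (M × ZMod 2) (fun k =>
    Finsupp.lift (SupA M) ℂ (M × ZMod 2) (fun k' => mulB k k'))

/-- The bilinear tensor map `ℂ[M][ξ] × ℂ[M][ξ] → ℂ[M][ξ] ⊗ ℂ[M][ξ]`. -/
def tens2 {M : Type*} : SupA M →ₗ[ℂ] SupA M →ₗ[ℂ] SupL2 M :=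
  Finsupp.lift (SupA M →ₗ[ℂ] SupL2 M) ℂ (M × ZMod 2) (fun k =>
    Finsupp.lift (SupL2 M) ℂ (M × ZMod 2) (fun k' =>
      Finsupp.single ((k.1, k'.1), (k.2, k'.2)) 1))

/-- `φ ⊗ φ` (no signs arise since `φ` is parity preserving, i.e. even). -/
def tensorSq {M M' : Type*} (φ : SupA M' →ₗ[ℂ] SupA M) : SupL2 M' →ₗ[ℂ] SupL2 M :=
  Finsupp.lift (SupL2 M) ℂ ((M' × M') × (ZMod 2 × ZMod 2)) (fun K =>
    tens2 (φ (Finsupp.single (K.1.1, K.2.1) 1)) (φ (Finsupp.single (K.1.2, K.2.2) 1)))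

/-- The comultiplication on basis elements. -/
def deltaB {M : Type*} [AddCommGroup M] (c : M →+ ℂ) (k : M × ZMod 2) : SupL2 M :=
  if k.2 = 0 then
    Finsupp.single ((k.1, k.1), (0, 0)) 1 + c k.1 • Finsupp.single ((k.1, k.1), (1, 1)) 1
  else
    Finsupp.single ((k.1, k.1), (1, 0)) 1 + Finsupp.single ((k.1, k.1), (0, 1)) 1

/-- The comultiplication `Δ : ℂ[M][ξ] → ℂ[M][ξ] ⊗ ℂ[M][ξ]`. -/
def Delta {M : Type*} [AddCommGroup M] (c : M →+ ℂ) : SupA M →ₗ[ℂ] SupL2 M :=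
  Finsupp.lift (SupL2 M) ℂ (M × ZMod 2) (deltaB c)

/-- The counit `ε` with `ε(x^m) = 1`, `ε(x^m ξ) = 0`. -/
def counit {M : Type*} : SupA M →ₗ[ℂ] ℂ :=
  Finsupp.lift ℂ ℂ (M × ZMod 2) (fun k => if k.2 = 0 then 1 else 0)

/-- The antipode `S` with `S(x^m) = x^{-m}`, `S(x^m ξ) = -x^{-m} ξ`. -/
def antipode {M : Type*} [AddCommGroup M] : SupA M →ₗ[ℂ] SupA M :=
  Finsupp.lift (SupA M) ℂ (M × ZMod 2) (fun k =>
    if k.2 = 0 then Finsupp.single (-k.1, 0) 1 else -Finsupp.single (-k.1, 1) 1)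

/-!
Evaluate `Δ ∘ φ = (φ ⊗ φ) ∘ Δ'` coefficientwise. On `x^{m'}`, the `(0,0)` component says that the
even coefficients of `u = φ(x^{m'})` satisfy `u_m u_n = δ_{mn} u_m`; as `ε(u) = 1` and `u` is even,
`u` is a single monomial `x^{f m'}`, and multiplicativity of `φ` makes `f` additive. On `ξ'`, the
`(1,0)` component forces `φ(ξ')` to be supported at `ξ`, say `φ(ξ') = aξ`, so
`φ(x^{m'}ξ') = a x^{f m'}ξ`. The `(1,1)` component on `x^{m'}` then reads `c(f m') = a² c'(m')`.
Conversely, with these formulas all three compatibilities are checked on basis elements.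
-/

open Finsupp (single single_apply)
open scoped Classical

lemma ZMod.two_cases (p : ZMod 2) : p = 0 ∨ p = 1 := by revert p; decide

section Coefficients

variable {M : Type*}

@[simp] lemma tens2_single_single (k k' : M × ZMod 2) (a b : ℂ) :
    tens2 (single k a) (single k' b) = single ((k.1, k'.1), (k.2, k'.2)) (a * b) := by
  simp [tens2, Finsupp.smul_single]

lemma tens2_apply (u v : SupA M) (m n : M) (p q : ZMod 2) :
    tens2 u v ((m, n), (p, q)) = u (m, p) * v (n, q) := by
  induction u using Finsupp.induction_linear with
  | zero => simp
  | add f g hf hg => simp [hf, hg, add_mul]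
  | single k a =>
    induction v using Finsupp.induction_linear with
    | zero => simp
    | add f g hf hg => simp [hf, hg, mul_add]
    | single k' b =>
      simp only [tens2_single_single, single_apply, Prod.ext_iff]
      split_ifs <;> simp_all

lemma counit_single (k : M × ZMod 2) (b : ℂ) :
    counit (single k b) = if k.2 = 0 then b else 0 := by
  simp [counit]

lemma exists_eq_single_of_isGroupLike (u : SupA M) (hu : u ≠ 0) (hodd : ∀ m, u (m, 1) = 0)
    (hmul : ∀ m n, u (m, 0) * u (n, 0) = if m = n then u (m, 0) else 0) :
    ∃ m, u = single (m, 0) 1 := by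
  obtain ⟨⟨m, p⟩, hm⟩ : ∃ k, u k ≠ 0 := by simpa [Finsupp.ext_iff] using hu
  obtain rfl : p = 0 := (ZMod.two_cases p).resolve_right (by rintro rfl; exact hm (hodd m))
  have hone : u (m, 0) = 1 := mul_left_cancel₀ hm (by simpa using hmul m m)
  refine ⟨m, Finsupp.ext fun ⟨n, q⟩ => ?_⟩
  rcases ZMod.two_cases q with rfl | rfl
  · by_cases hn : m = n
    · simp [← hn, hone]
    · simpa [hone, hn] using hmul m n
  · simp [hodd]

variable [AddCommGroup M]

@[simp] lemma mulA_single_single (k k' : M × ZMod 2) (a b : ℂ) :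
    mulA (single k a) (single k' b) = (a * b) • mulB k k' := by
  simp [mulA, smul_smul]

lemma Delta_single_even (c : M →+ ℂ) (m : M) (b : ℂ) :
    Delta c (single (m, 0) b) = single ((m, m), (0, 0)) b + single ((m, m), (1, 1)) (c m * b) := by
  simp [Delta, deltaB, Finsupp.smul_single, mul_comm, -Finsupp.single_mul]

lemma Delta_single_odd (c : M →+ ℂ) (m : M) (b : ℂ) :
    Delta c (single (m, 1) b) = single ((m, m), (1, 0)) b + single ((m, m), (0, 1)) b := by
  simp [Delta, deltaB]

lemma Delta_apply (c : M →+ ℂ) (u : SupA M) (m n : M) (p q : ZMod 2) :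
    Delta c u ((m, n), (p, q)) =
      if m = n then (if p = q then (if p = 0 then 1 else c m) * u (m, 0) else u (m, 1)) else 0 := by
  induction u using Finsupp.induction_linear with
  | zero => simp
  | add f g hf hg => simp only [map_add, Finsupp.add_apply, hf, hg]; split_ifs <;> ring
  | single k a =>
    obtain ⟨k, r⟩ := k
    rcases ZMod.two_cases r with rfl | rfl <;>
      simp only [Delta_single_even, Delta_single_odd, Finsupp.add_apply, single_apply,
        Prod.ext_iff] <;>
      rcases ZMod.two_cases p with rfl | rfl <;> rcases ZMod.two_cases q with rfl | rfl <;>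
      by_cases hmn : m = n <;> by_cases hkm : k = m <;> simp_all [mul_comm]

lemma antipode_single_even (m : M) (b : ℂ) : antipode (single (m, 0) b) = single (-m, 0) b := by
  simp [antipode]

lemma antipode_single_odd (m : M) (b : ℂ) : antipode (single (m, 1) b) = -single (-m, 1) b := by
  simp [antipode]

end Coefficients

section TensorSquare

variable {M M' : Type*} (φ : SupA M' →ₗ[ℂ] SupA M)

lemma tensorSq_single (K : (M' × M') × (ZMod 2 × ZMod 2)) :
    tensorSq φ (single K 1) = tens2 (φ (single (K.1.1, K.2.1) 1)) (φ (single (K.1.2, K.2.2) 1)) := by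
  simp [tensorSq]

variable [AddCommGroup M']

lemma tensorSq_Delta_single_even (c' : M' →+ ℂ) (m' : M') :
    tensorSq φ (Delta c' (single (m', 0) 1)) =
      tens2 (φ (single (m', 0) 1)) (φ (single (m', 0) 1)) +
        c' m' • tens2 (φ (single (m', 1) 1)) (φ (single (m', 1) 1)) := by
  rw [Delta_single_even, mul_one, ← Finsupp.smul_single_one _ (c' m'), map_add, map_smul,
    tensorSq_single, tensorSq_single]

lemma tensorSq_Delta_single_odd (c' : M' →+ ℂ) (m' : M') :
    tensorSq φ (Delta c' (single (m', 1) 1)) =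
      tens2 (φ (single (m', 1) 1)) (φ (single (m', 0) 1)) +
        tens2 (φ (single (m', 0) 1)) (φ (single (m', 1) 1)) := by
  rw [Delta_single_odd, map_add, tensorSq_single, tensorSq_single]

end TensorSquare

section HopfMorphism

variable {M M' : Type*} [AddCommGroup M] [AddCommGroup M'] (φ : SupA M' →ₗ[ℂ] SupA M)

lemma exists_map_single_even_eq_single {c : M →+ ℂ} {c' : M' →+ ℂ}
    (hpar : ∀ (k : M' × ZMod 2) (z : M × ZMod 2), z.2 ≠ k.2 → φ (single k 1) z = 0)
    (hΔ : (Delta c).comp φ = (tensorSq φ).comp (Delta c')) (hε : counit.comp φ = counit)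
    (m' : M') : ∃ m, φ (single (m', 0) 1) = single (m, 0) 1 := by
  apply exists_eq_single_of_isGroupLike
  · intro h
    simpa [h, counit_single] using LinearMap.congr_fun hε (single (m', 0) 1)
  · exact fun m => hpar _ (m, 1) (by simp)
  · intro m n
    have hw : φ (single (m', 1) 1) (m, 0) = 0 := hpar _ (m, 0) (by simp)
    have h := LinearMap.congr_fun hΔ (single (m', 0) 1)
    simp only [LinearMap.comp_apply, tensorSq_Delta_single_even] at h
    simpa [tens2_apply, Delta_apply, hw] using congr($h ((m, n), (0, 0))).symm

lemma exists_addMonoidHom_map_single_even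
    (hmul : ∀ x y : SupA M', φ (mulA x y) = mulA (φ x) (φ y))
    (hsingle : ∀ m' : M', ∃ m, φ (single (m', 0) 1) = single (m, 0) 1) :
    ∃ f : M' →+ M, ∀ m', φ (single (m', 0) 1) = single (f m', 0) 1 := by
  choose g hg using hsingle
  refine ⟨AddMonoidHom.mk' g fun x y => ?_, hg⟩
  simpa [mulB, hg, Finsupp.single_left_inj] using hmul (single (x, 0) 1) (single (y, 0) 1)

lemma map_single_odd_zero_eq_smul {c : M →+ ℂ} {c' : M' →+ ℂ}
    (hpar : ∀ (k : M' × ZMod 2) (z : M × ZMod 2), z.2 ≠ k.2 → φ (single k 1) z = 0)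
    (hΔ : (Delta c).comp φ = (tensorSq φ).comp (Delta c'))
    (hone : φ (single (0, 0) 1) = single (0, 0) 1) :
    φ (single (0, 1) 1) = φ (single (0, 1) 1) (0, 1) • single (0, 1) 1 := by
  have h := LinearMap.congr_fun hΔ (single (0, 1) 1)
  simp only [LinearMap.comp_apply, tensorSq_Delta_single_odd, hone] at h
  ext ⟨n, q⟩
  rcases ZMod.two_cases q with rfl | rfl
  · simpa using hpar (0, 1) (n, 0) (by simp)
  · by_cases hn : n = 0
    · simp [hn]
    · simpa [Delta_apply, tens2_apply, hn, single_apply] using congr($h ((n, 0), (1, 0))).symm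

lemma map_single_odd (hmul : ∀ x y : SupA M', φ (mulA x y) = mulA (φ x) (φ y))
    {m' : M'} {m : M} {a : ℂ} (heven : φ (single (m', 0) 1) = single (m, 0) 1)
    (hξ : φ (single (0, 1) 1) = a • single (0, 1) 1) :
    φ (single (m', 1) 1) = a • single (m, 1) 1 := by
  simpa [mulB, heven, hξ] using hmul (single (m', 0) 1) (single (0, 1) 1)

lemma apply_eq_sq_mul_of_comp_Delta {c : M →+ ℂ} {c' : M' →+ ℂ}
    (hΔ : (Delta c).comp φ = (tensorSq φ).comp (Delta c'))
    {m' : M'} {m : M} {a : ℂ} (heven : φ (single (m', 0) 1) = single (m, 0) 1)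
    (hodd : φ (single (m', 1) 1) = a • single (m, 1) 1) :
    c m = a ^ 2 * c' m' := by
  have h := LinearMap.congr_fun hΔ (single (m', 0) 1)
  simp only [LinearMap.comp_apply, tensorSq_Delta_single_even, heven, hodd] at h
  simpa [Delta_apply, tens2_apply, sq, mul_comm] using congr($h ((m, m), (1, 1)))

variable {f : M' →+ M} {a : ℂ} (heven : ∀ m', φ (single (m', 0) 1) = single (f m', 0) 1)
  (hodd : ∀ m', φ (single (m', 1) 1) = a • single (f m', 1) 1)
include heven hodd

lemma comp_Delta_eq {c : M →+ ℂ} {c' : M' →+ ℂ} (hc : ∀ m', c (f m') = a ^ 2 * c' m') :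
    (Delta c).comp φ = (tensorSq φ).comp (Delta c') := by
  refine Finsupp.basisSingleOne.ext fun ⟨m', p⟩ => ?_
  rcases ZMod.two_cases p with rfl | rfl
  · simp only [Finsupp.coe_basisSingleOne, LinearMap.comp_apply, tensorSq_Delta_single_even]
    simp [heven, hodd, Delta_single_even, hc, sq, mul_comm, -Finsupp.single_mul]
  · simp only [Finsupp.coe_basisSingleOne, LinearMap.comp_apply, tensorSq_Delta_single_odd]
    simp [heven, hodd, Delta_single_odd]

lemma counit_comp_eq : counit.comp φ = counit := by
  refine Finsupp.basisSingleOne.ext fun ⟨m', p⟩ => ?_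
  rcases ZMod.two_cases p with rfl | rfl <;> simp [heven, hodd, counit_single]

lemma comp_antipode_eq : φ.comp antipode = antipode.comp φ := by
  refine Finsupp.basisSingleOne.ext fun ⟨m', p⟩ => ?_
  rcases ZMod.two_cases p with rfl | rfl
  · simp [heven, antipode_single_even]
  · simp [hodd, antipode_single_odd]

end HopfMorphism

theorem stmt3_general {M M' : Type*} [AddCommGroup M] [AddCommGroup M']
    (c : M →+ ℂ) (c' : M' →+ ℂ)
    (φ : SupA M' →ₗ[ℂ] SupA M)
    (hmul : ∀ x y : SupA M', φ (mulA x y) = mulA (φ x) (φ y))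
    (hpar : ∀ (k : M' × ZMod 2) (z : M × ZMod 2), z.2 ≠ k.2 → φ (Finsupp.single k 1) z = 0) :
    ((Delta c).comp φ = (tensorSq φ).comp (Delta c') ∧
      counit.comp φ = counit ∧
      φ.comp antipode = antipode.comp φ)
    ↔ ∃ (f : M' →+ M) (a : ℂ),
        (∀ m' : M', φ (Finsupp.single (m', (0 : ZMod 2)) 1)
          = Finsupp.single (f m', (0 : ZMod 2)) 1) ∧
        φ (Finsupp.single ((0 : M'), (1 : ZMod 2)) 1)
          = a • Finsupp.single ((0 : M), (1 : ZMod 2)) 1 ∧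
        ∀ m' : M', c (f m') = a ^ 2 * c' m' := by
  constructor
  · rintro ⟨hΔ, hε, -⟩
    obtain ⟨f, heven⟩ := exists_addMonoidHom_map_single_even φ hmul
      (exists_map_single_even_eq_single φ hpar hΔ hε)
    have hξ := map_single_odd_zero_eq_smul φ hpar hΔ (by simpa using heven 0)
    exact ⟨f, _, heven, hξ, fun m' =>
      apply_eq_sq_mul_of_comp_Delta φ hΔ (heven m') (map_single_odd φ hmul (heven m') hξ)⟩
  · rintro ⟨f, a, heven, hξ, hc⟩
    have hodd m' := map_single_odd φ hmul (heven m') hξ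
    exact ⟨comp_Delta_eq φ heven hodd hc, counit_comp_eq φ heven hodd,
      comp_antipode_eq φ heven hodd⟩

/-- A superalgebra map `φ* : ℂ[M'][ξ'] → ℂ[M][ξ]` (unital, multiplicative,
parity-preserving `ℂ`-linear) is a morphism of the supertorus Hopf superalgebra
structures determined by `c` and `c'` if and only if: (i) there is a lattice map
`φ̄* : M' → M` with `φ*(x^{m'}) = x^{φ̄*(m')}`; (ii) `φ*(ξ') = aξ` for some `a ∈ ℂ`;
and (iii) `⟨φ̄*(m'), c⟩ = a² ⟨m', c'⟩` for all `m' ∈ M'`. -/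
theorem stmt3 {M M' : Type*} [AddCommGroup M] [AddCommGroup M']
    [Module.Free ℤ M] [Module.Finite ℤ M] [Module.Free ℤ M'] [Module.Finite ℤ M']
    (c : M →+ ℂ) (c' : M' →+ ℂ)
    (φ : SupA M' →ₗ[ℂ] SupA M)
    (hunit : φ (Finsupp.single ((0 : M'), (0 : ZMod 2)) 1)
      = Finsupp.single ((0 : M), (0 : ZMod 2)) 1)
    (hmul : ∀ x y : SupA M', φ (mulA x y) = mulA (φ x) (φ y))
    (hpar : ∀ (k : M' × ZMod 2) (z : M × ZMod 2), z.2 ≠ k.2 → φ (Finsupp.single k 1) z = 0) :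
    ((Delta c).comp φ = (tensorSq φ).comp (Delta c') ∧
      counit.comp φ = counit ∧
      φ.comp antipode = antipode.comp φ)
    ↔ ∃ (f : M' →+ M) (a : ℂ),
        (∀ m' : M', φ (Finsupp.single (m', (0 : ZMod 2)) 1)
          = Finsupp.single (f m', (0 : ZMod 2)) 1) ∧
        φ (Finsupp.single ((0 : M'), (1 : ZMod 2)) 1)
          = a • Finsupp.single ((0 : M), (1 : ZMod 2)) 1 ∧
        ∀ m' : M', c (f m') = a ^ 2 * c' m' :=
  stmt3_general c c' φ hmul hpar

end
end

section
/- Let σ be a strongly convex rational polyhedral cone in N_R with S_σ = σ̌ ∩ M its dual semigroup (M = N^*), τ a face of σ cut out by m_{σ,τ} ∈ S_σ (i.e. τ = σ ∩ ker m_{σ,τ}), and c ∈ N_C. Then the localization of the ideal J_c^σ = (x^m ∈ C[S_σ] : ⟨m,c⟩ ≠ 0) at the monomial x^{m_{σ,τ}} equals J_c^τ = (x^m ∈ C[S_τ] : ⟨m,c⟩ ≠ 0), as ideals of C[S_τ] = C[S_σ]_{x^{m_{σ,τ}}}. -/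
noncomputable section

/-- The dual semigroup `S_σ = σ̌ ∩ M` of a cone `σ ⊆ ℝⁿ`, inside the lattice `M = ℤⁿ`. -/
def dualSemi {n : ℕ} (σ : Set (Fin n → ℝ)) : AddSubmonoid (Fin n → ℤ) where
  carrier := {m | ∀ u ∈ σ, 0 ≤ ∑ i, (m i : ℝ) * u i}
  zero_mem' := by intro u _; simp
  add_mem' := by
    intro a b ha hb u hu
    have h := add_nonneg (ha u hu) (hb u hu)
    rw [← Finset.sum_add_distrib] at h
    have e : ∑ i, (((a + b) i : ℤ) : ℝ) * u i
        = ∑ i, ((a i : ℝ) * u i + (b i : ℝ) * u i) := by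
      refine Finset.sum_congr rfl fun i _ => ?_
      simp [Pi.add_apply]
      ring
    rw [e]
    exact h

/-- `σ` is a rational polyhedral cone: generated by finitely many lattice points. -/
def IsRatPolyCone {n : ℕ} (σ : Set (Fin n → ℝ)) : Prop :=
  ∃ (k : ℕ) (v : Fin k → (Fin n → ℤ)),
    σ = {u | ∃ lam : Fin k → ℝ, (∀ i, 0 ≤ lam i) ∧
      u = ∑ i, fun j => lam i * (v i j : ℝ)}

/-- `σ` is strongly convex: it contains no line through the origin. -/
def StronglyConvex {n : ℕ} (σ : Set (Fin n → ℝ)) : Prop :=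
  ∀ u ∈ σ, -u ∈ σ → u = 0

/-- The face of `σ` cut out by `m₀ ∈ S_σ`. -/
def faceCut {n : ℕ} (σ : Set (Fin n → ℝ)) (m0 : Fin n → ℤ) : Set (Fin n → ℝ) :=
  {u ∈ σ | ∑ i, (m0 i : ℝ) * u i = 0}

/-- `τ` is a face of `σ`. -/
def IsFaceOf {n : ℕ} (τ σ : Set (Fin n → ℝ)) : Prop :=
  ∃ m0 ∈ dualSemi σ, τ = faceCut σ m0

/-- The pairing of `m ∈ M = ℤⁿ` with `c ∈ N_ℂ = ℂⁿ`. -/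
def pairC {n : ℕ} (m : Fin n → ℤ) (c : Fin n → ℂ) : ℂ := ∑ i, (m i : ℂ) * c i

/-!
A monomial `x^m` of `ℂ[S_τ]` becomes a monomial of `ℂ[S_σ]` after multiplication by a high
power of `x^{m₀}`, which is a unit of `ℂ[S_τ]`: on each generator `v` of `σ` the pairing of
`m + k m₀` is `⟨m, v⟩ + k ⟨m₀, v⟩`, where `⟨m₀, v⟩ ≥ 0` and `⟨m, v⟩ ≥ 0` whenever
`⟨m₀, v⟩ = 0`. Since `k ↦ ⟨m + k m₀, c⟩` is affine, it cannot vanish at two consecutive `k`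
when `⟨m, c⟩ ≠ 0`, so some such `m + k m₀` also pairs nontrivially with `c`.
-/

open Filter

lemma sum_add_nsmul_mul {R : Type*} [CommRing R] {n : ℕ} (m m0 : Fin n → ℤ) (k : ℕ)
    (u : Fin n → R) :
    ∑ i, ((m + k • m0) i : R) * u i = ∑ i, (m i : R) * u i + k * ∑ i, (m0 i : R) * u i := by
  simp only [Pi.add_apply, Pi.smul_apply]
  simp only [nsmul_eq_mul, Int.cast_add, Int.cast_mul, Int.cast_natCast, add_mul, mul_assoc,
    Finset.sum_add_distrib, Finset.mul_sum]

lemma pairC_add_nsmul {n : ℕ} (m m0 : Fin n → ℤ) (k : ℕ) (c : Fin n → ℂ) :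
    pairC (m + k • m0) c = pairC m c + k * pairC m0 c :=
  sum_add_nsmul_mul m m0 k c

lemma frequently_pairC_add_nsmul_ne_zero {n : ℕ} {m : Fin n → ℤ} {c : Fin n → ℂ}
    (hm : pairC m c ≠ 0) (m0 : Fin n → ℤ) :
    ∃ᶠ k : ℕ in atTop, pairC (m + k • m0) c ≠ 0 := by
  refine frequently_atTop.2 fun K => ?_
  by_contra! h
  have hK := h K le_rfl
  have hK1 := h (K + 1) K.le_succ
  rw [pairC_add_nsmul] at hK hK1
  push_cast at hK1
  have h0 : pairC m0 c = 0 := by linear_combination hK1 - hK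
  exact hm (by simpa [h0] using hK)

lemma dualSemi_anti {n : ℕ} {σ τ : Set (Fin n → ℝ)} (h : τ ⊆ σ) : dualSemi σ ≤ dualSemi τ :=
  fun _ hm u hu => hm u (h hu)

lemma faceCut_subset {n : ℕ} (σ : Set (Fin n → ℝ)) (m0 : Fin n → ℤ) : faceCut σ m0 ⊆ σ :=
  fun _ hu => hu.1

lemma neg_mem_dualSemi_faceCut {n : ℕ} (σ : Set (Fin n → ℝ)) (m0 : Fin n → ℤ) :
    -m0 ∈ dualSemi (faceCut σ m0) := by
  intro u hu
  simp [neg_mul, Finset.sum_neg_distrib, hu.2]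

lemma mem_dualSemi_of_generators {n t : ℕ} {σ : Set (Fin n → ℝ)} {v : Fin t → Fin n → ℤ}
    (hv : σ = {u | ∃ lam : Fin t → ℝ, (∀ i, 0 ≤ lam i) ∧ u = ∑ i, fun j => lam i * (v i j : ℝ)})
    {m : Fin n → ℤ} (hm : ∀ i, 0 ≤ ∑ j, (m j : ℝ) * v i j) : m ∈ dualSemi σ := by
  intro u hu
  rw [hv] at hu
  obtain ⟨lam, hlam, rfl⟩ := hu
  have h : ∑ j, (m j : ℝ) * (∑ i, fun j => lam i * (v i j : ℝ)) j
      = ∑ i, lam i * ∑ j, (m j : ℝ) * v i j := by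
    simp only [Finset.sum_apply, Finset.mul_sum]
    rw [Finset.sum_comm]
    exact Finset.sum_congr rfl fun _ _ => Finset.sum_congr rfl fun _ _ => by ring
  rw [h]
  exact Finset.sum_nonneg fun i _ => mul_nonneg (hlam i) (hm i)

lemma generator_mem {n t : ℕ} {σ : Set (Fin n → ℝ)} {v : Fin t → Fin n → ℤ}
    (hv : σ = {u | ∃ lam : Fin t → ℝ, (∀ i, 0 ≤ lam i) ∧ u = ∑ i, fun j => lam i * (v i j : ℝ)})
    (i : Fin t) : (fun j => (v i j : ℝ)) ∈ σ := by
  rw [hv]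
  refine ⟨Pi.single i 1, fun _ => by rw [Pi.single_apply]; positivity, ?_⟩
  funext j
  simp [Finset.sum_apply, Pi.single_apply]

lemma eventually_nonneg_add_mul {a b : ℝ} (hb : 0 ≤ b) (ha : b = 0 → 0 ≤ a) :
    ∀ᶠ k : ℕ in atTop, 0 ≤ a + k * b := by
  rcases hb.eq_or_lt with rfl | hb
  · exact Eventually.of_forall fun k => by simpa using ha rfl
  · exact (tendsto_atTop_add_const_left _ a
      (tendsto_natCast_atTop_atTop.atTop_mul_const hb)).eventually_ge_atTop 0

lemma eventually_add_nsmul_mem_dualSemi {n : ℕ} {σ : Set (Fin n → ℝ)} (hpoly : IsRatPolyCone σ)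
    {m0 : Fin n → ℤ} (hm0 : m0 ∈ dualSemi σ) {m : Fin n → ℤ}
    (hm : m ∈ dualSemi (faceCut σ m0)) :
    ∀ᶠ k : ℕ in atTop, m + k • m0 ∈ dualSemi σ := by
  obtain ⟨t, v, hv⟩ := hpoly
  have hgen := generator_mem hv
  have h : ∀ i, ∀ᶠ k : ℕ in atTop,
      0 ≤ ∑ j, (m j : ℝ) * v i j + k * ∑ j, (m0 j : ℝ) * v i j := fun i =>
    eventually_nonneg_add_mul (hm0 _ (hgen i)) fun h0 => hm _ ⟨hgen i, h0⟩
  filter_upwards [eventually_all.2 h] with k hk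
  exact mem_dualSemi_of_generators hv fun i => (sum_add_nsmul_mul (R := ℝ) m m0 k _).symm ▸ hk i

theorem stmt7_general (n : ℕ) (σ : Set (Fin n → ℝ))
    (hpoly : IsRatPolyCone σ)
    (c : Fin n → ℂ) (m0 : Fin n → ℤ) (hm0 : m0 ∈ dualSemi σ) :
    Ideal.span {f : AddMonoidAlgebra ℂ (dualSemi (faceCut σ m0)) |
        ∃ m : dualSemi (faceCut σ m0), (↑m : Fin n → ℤ) ∈ dualSemi σ ∧
          pairC (↑m) c ≠ 0 ∧ f = AddMonoidAlgebra.single m 1}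
      = Ideal.span {f : AddMonoidAlgebra ℂ (dualSemi (faceCut σ m0)) |
        ∃ m : dualSemi (faceCut σ m0),
          pairC (↑m) c ≠ 0 ∧ f = AddMonoidAlgebra.single m 1} := by
  refine le_antisymm (Ideal.span_mono fun f ⟨m, _, hc, hf⟩ => ⟨m, hc, hf⟩) ?_
  rw [Ideal.span_le]
  rintro f ⟨m, hc, rfl⟩
  obtain ⟨k, hkc, hkσ⟩ := ((frequently_pairC_add_nsmul_ne_zero hc m0).and_eventually
    (eventually_add_nsmul_mem_dualSemi hpoly hm0 m.2)).exists
  let negShift : dualSemi (faceCut σ m0) :=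
    ⟨k • -m0, nsmul_mem (neg_mem_dualSemi_faceCut σ m0) k⟩
  let shifted : dualSemi (faceCut σ m0) :=
    ⟨m + k • m0, dualSemi_anti (faceCut_subset σ m0) hkσ⟩
  have hsplit : AddMonoidAlgebra.single m (1 : ℂ)
      = AddMonoidAlgebra.single negShift 1 * AddMonoidAlgebra.single shifted 1 := by
    rw [AddMonoidAlgebra.single_mul_single, one_mul]
    congr 1
    exact Subtype.ext (by simp [negShift, shifted])
  rw [SetLike.mem_coe, hsplit]
  exact Ideal.mul_mem_left _ _ (Ideal.subset_span ⟨shifted, hkσ, hkc, rfl⟩)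

/-- Localizing the ideal `J_c^σ` of `ℂ[S_σ]` at the monomial `x^{m₀}` cutting out the
face `τ` of `σ` gives the ideal `J_c^τ` of `ℂ[S_τ]`: as ideals of
`ℂ[S_τ] = ℂ[S_σ]_{x^{m₀}}`, the ideal generated by the monomials of `S_σ` pairing
nontrivially with `c` equals the one generated by the monomials of `S_τ` pairing
nontrivially with `c`. -/
theorem stmt7 (n : ℕ) (σ : Set (Fin n → ℝ))
    (hpoly : IsRatPolyCone σ) (hsc : StronglyConvex σ)
    (c : Fin n → ℂ) (m0 : Fin n → ℤ) (hm0 : m0 ∈ dualSemi σ) :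
    Ideal.span {f : AddMonoidAlgebra ℂ (dualSemi (faceCut σ m0)) |
        ∃ m : dualSemi (faceCut σ m0), (↑m : Fin n → ℤ) ∈ dualSemi σ ∧
          pairC (↑m) c ≠ 0 ∧ f = AddMonoidAlgebra.single m 1}
      = Ideal.span {f : AddMonoidAlgebra ℂ (dualSemi (faceCut σ m0)) |
        ∃ m : dualSemi (faceCut σ m0),
          pairC (↑m) c ≠ 0 ∧ f = AddMonoidAlgebra.single m 1} :=
  stmt7_general n σ hpoly c m0 hm0
end
end

section
/- Let S be a finitely generated affine semigroup in a lattice M, c ∈ Hom_Z(M, C), and H = span_C{x^m : ⟨m,c⟩ = 0} ⊆ C[S]. Let J ⊆ C[S] be a monomial ideal containing J_c = (x^m : ⟨m,c⟩ ≠ 0). Consider A = C[S] ⊕ ξJ with ξ² = 0, and the odd derivation Q on A determined by Q(x^m) = ⟨m,c⟩ x^m ξ and Q(x^m ξ) = x^m. Then ker(Q)|_{A^{Q²}} / Q(A^{Q²}) ≅ C[S]/J as vector spaces, where A^{Q²} is the kernel of Q² on A. -/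
/-!
Write elements of `A = ℂ[S] ⊕ ξJ` as pairs `(a, j) = a + jξ` and let `T` be the weight operator
`x^m ↦ ⟨m,c⟩ x^m`. Then `Q (a, j) = (j, T a)` and `Q² = T × T`, so `ker Q² ⊓ ker Q` consists of the
pairs `(a, 0)` with `T a = 0`, and `Q (ker Q²)` of the pairs `(j, 0)` with `j ∈ J`, `T j = 0`.
Hence `(a, 0) ↦ a mod J` induces an injection of the Duflo–Serganova cohomology into `ℂ[S]/J`.
It is onto because every `b ∈ ℂ[S]` splits into its weight-zero part, killed by `T`, and the
rest, which lies in `J_c ⊆ J`; that is, `ker T + J = ℂ[S]`.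
-/

set_option synthInstance.maxHeartbeats 1000000
set_option maxHeartbeats 1000000

/-- The monomial `x^s` in the semigroup algebra `ℂ[S]`. -/
noncomputable def mono {M : Type*} [AddCommGroup M] (S : AddSubmonoid M) (s : S) :
    AddMonoidAlgebra ℂ S :=
  AddMonoidAlgebra.single s 1

namespace AddMonoidAlgebra

variable {k G : Type*} [Ring k] [AddMonoid G] {w : G → k}

theorem map_eq_zero_of_weight_eq_zero {T : AddMonoidAlgebra k G →ₗ[k] AddMonoidAlgebra k G}
    (hT : ∀ m, T (single m 1) = w m • single m 1) {a : AddMonoidAlgebra k G}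
    (ha : ∀ m ∈ a.coeff.support, w m = 0) : T a = 0 := by
  rw [← a.sum_coeff_single, map_finsuppSum]
  refine Finset.sum_eq_zero fun m hm => ?_
  change T (single m (a.coeff m)) = 0
  rw [← mul_one (a.coeff m), ← smul_single', map_smul, hT, ha m hm, zero_smul, smul_zero]

theorem mem_of_weight_ne_zero {J : Ideal (AddMonoidAlgebra k G)}
    (hJ : Ideal.span (of' k G '' {m | w m ≠ 0}) ≤ J) {a : AddMonoidAlgebra k G}
    (ha : ∀ m ∈ a.coeff.support, w m ≠ 0) : a ∈ J :=
  hJ <| mem_ideal_span_of'_image.mpr fun m hm => ⟨m, ha m hm, 0, (zero_add m).symm⟩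

theorem ker_sup_restrictScalars_eq_top {T : AddMonoidAlgebra k G →ₗ[k] AddMonoidAlgebra k G}
    (hT : ∀ m, T (single m 1) = w m • single m 1) {J : Ideal (AddMonoidAlgebra k G)}
    (hJ : Ideal.span (of' k G '' {m | w m ≠ 0}) ≤ J) :
    LinearMap.ker T ⊔ J.restrictScalars k = ⊤ := by
  classical
  refine Submodule.eq_top_iff'.mpr fun b => Submodule.mem_sup.mpr ?_
  set a := ofCoeff (b.coeff.filter (w · = 0))
  refine ⟨a, map_eq_zero_of_weight_eq_zero hT fun m hm => ?_, b - a,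
    mem_of_weight_ne_zero hJ fun m hm => ?_, add_sub_cancel a b⟩
  · rw [coeff_ofCoeff, Finsupp.mem_support_iff, Finsupp.filter_apply] at hm
    exact not_not.mp fun h => hm (if_neg h)
  · rw [coeff_sub, Finsupp.mem_support_iff, Finsupp.sub_apply, coeff_ofCoeff,
      Finsupp.filter_apply] at hm
    exact fun h => hm (by rw [if_pos h, sub_self])

end AddMonoidAlgebra

section DufloSerganova

open LinearMap

variable {R V : Type*} [Ring R] [AddCommGroup V] [Module R V] {N : Submodule R V}
  {T : V →ₗ[R] V} {Q : V × N →ₗ[R] V × N}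

-- The hypothesis `hQ` below says that `Q` is the odd operator `(a, j) ↦ (j, T a)` on `V ⊕ ξN`.

variable (N Q) in
def cocycleToQuotient : ↥(ker (Q ∘ₗ Q) ⊓ ker Q) →ₗ[R] V ⧸ N :=
  N.mkQ ∘ₗ fst R V N ∘ₗ (ker (Q ∘ₗ Q) ⊓ ker Q).subtype

theorem mem_ker_iff_of_odd (hQ : ∀ x, (Q x).1 = x.2 ∧ ((Q x).2 : V) = T x.1) (x : V × N) :
    x ∈ ker Q ↔ (x.2 : V) = 0 ∧ T x.1 = 0 := by
  rw [mem_ker, Prod.ext_iff, Subtype.ext_iff, (hQ x).1, (hQ x).2]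
  rfl

theorem mem_ker_comp_self_iff_of_odd (hQ : ∀ x, (Q x).1 = x.2 ∧ ((Q x).2 : V) = T x.1)
    (x : V × N) : x ∈ ker (Q ∘ₗ Q) ↔ T x.1 = 0 ∧ T x.2 = 0 := by
  rw [mem_ker, comp_apply, ← mem_ker, mem_ker_iff_of_odd hQ, (hQ x).1, (hQ x).2]

theorem cocycleToQuotient_surjective (hQ : ∀ x, (Q x).1 = x.2 ∧ ((Q x).2 : V) = T x.1)
    (hT : ker T ⊔ N = ⊤) : Function.Surjective (cocycleToQuotient N Q) := by
  intro q
  obtain ⟨b, rfl⟩ := N.mkQ_surjective q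
  obtain ⟨a, ha, j, hj, rfl⟩ := Submodule.mem_sup.mp (hT ▸ Submodule.mem_top : b ∈ ker T ⊔ N)
  have hmem : ((a, 0) : V × N) ∈ ker (Q ∘ₗ Q) ⊓ ker Q :=
    ⟨(mem_ker_comp_self_iff_of_odd hQ _).mpr ⟨ha, map_zero T⟩,
      (mem_ker_iff_of_odd hQ _).mpr ⟨rfl, ha⟩⟩
  refine ⟨⟨(a, 0), hmem⟩, (Submodule.Quotient.eq N).mpr ?_⟩
  simpa using N.neg_mem hj

theorem ker_cocycleToQuotient (hQ : ∀ x, (Q x).1 = x.2 ∧ ((Q x).2 : V) = T x.1) :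
    ker (cocycleToQuotient N Q) =
      Submodule.comap (ker (Q ∘ₗ Q) ⊓ ker Q).subtype (Submodule.map Q (ker (Q ∘ₗ Q))) := by
  ext ⟨x, hx⟩
  obtain ⟨hx₂, hx₁⟩ := (mem_ker_iff_of_odd hQ x).mp hx.2
  rw [mem_ker, Submodule.mem_comap, Submodule.subtype_apply, Submodule.mem_map]
  refine ⟨fun hN => ⟨(0, ⟨x.1, (Submodule.Quotient.mk_eq_zero N).mp hN⟩),
    (mem_ker_comp_self_iff_of_odd hQ _).mpr ⟨map_zero T, hx₁⟩, ?_⟩, ?_⟩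
  · refine Prod.ext (hQ _).1 (Subtype.ext ?_)
    rw [(hQ _).2, map_zero, hx₂]
  · rintro ⟨y, -, rfl⟩
    exact (Submodule.Quotient.mk_eq_zero N).mpr ((hQ y).1 ▸ y.2.2 : (Q y).1 ∈ N)

end DufloSerganova

theorem stmt10_general {M : Type*} [AddCommGroup M]
    (S : AddSubmonoid M) (c : M →+ ℂ)
    (J : Ideal (AddMonoidAlgebra ℂ S))
    (hJc : Ideal.span (mono S '' {m : S | c ↑m ≠ 0}) ≤ J)
    (T : AddMonoidAlgebra ℂ S →ₗ[ℂ] AddMonoidAlgebra ℂ S)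
    (hT : ∀ m : S, T (mono S m) = c ↑m • mono S m)
    (Q : (AddMonoidAlgebra ℂ S × ↥(Submodule.restrictScalars ℂ J)) →ₗ[ℂ]
      (AddMonoidAlgebra ℂ S × ↥(Submodule.restrictScalars ℂ J)))
    (hQ : ∀ x, (Q x).1 = (↑x.2 : AddMonoidAlgebra ℂ S) ∧
      ((Q x).2 : AddMonoidAlgebra ℂ S) = T x.1) :
    ∃ θ : ↥(LinearMap.ker (Q.comp Q) ⊓ LinearMap.ker Q) →ₗ[ℂ]
        (AddMonoidAlgebra ℂ S ⧸ Submodule.restrictScalars ℂ J),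
      Function.Surjective θ ∧
      LinearMap.ker θ = Submodule.comap (LinearMap.ker (Q.comp Q) ⊓ LinearMap.ker Q).subtype
        (Submodule.map Q (LinearMap.ker (Q.comp Q))) := by
  have hT_sup_J : LinearMap.ker T ⊔ J.restrictScalars ℂ = ⊤ :=
    AddMonoidAlgebra.ker_sup_restrictScalars_eq_top (w := fun m : S => c m) hT hJc
  exact ⟨cocycleToQuotient _ Q, cocycleToQuotient_surjective hQ hT_sup_J,
    ker_cocycleToQuotient hQ⟩

/-- Duflo–Serganova cohomology of a toric supervariety: for `A = ℂ[S] ⊕ ξJ` with the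
odd derivation `Q` determined by `Q(x^m) = ⟨m,c⟩ x^m ξ` and `Q(x^m ξ) = x^m`, one has
`ker(Q|_{A^{Q²}}) / Q(A^{Q²}) ≅ ℂ[S]/J` as vector spaces, where `A^{Q²} = ker Q²`.
The isomorphism of `ker(Q)|_{A^{Q²}} / Q(A^{Q²})` with `ℂ[S]/J` is expressed by a
surjective linear map from `ker Q² ⊓ ker Q` onto `ℂ[S]/J` whose kernel is exactly
`Q(ker Q²)`. -/
theorem stmt10 {M : Type*} [AddCommGroup M] [Module.Free ℤ M] [Module.Finite ℤ M]
    (S : AddSubmonoid M) (hS : S.FG) (c : M →+ ℂ)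
    (J : Ideal (AddMonoidAlgebra ℂ S))
    (G : Set S) (hmono : J = Ideal.span (mono S '' G))
    (hJc : Ideal.span (mono S '' {m : S | c ↑m ≠ 0}) ≤ J)
    (T : AddMonoidAlgebra ℂ S →ₗ[ℂ] AddMonoidAlgebra ℂ S)
    (hT : ∀ m : S, T (mono S m) = c ↑m • mono S m)
    (Q : (AddMonoidAlgebra ℂ S × ↥(Submodule.restrictScalars ℂ J)) →ₗ[ℂ]
      (AddMonoidAlgebra ℂ S × ↥(Submodule.restrictScalars ℂ J)))
    (hQ : ∀ x, (Q x).1 = (↑x.2 : AddMonoidAlgebra ℂ S) ∧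
      ((Q x).2 : AddMonoidAlgebra ℂ S) = T x.1) :
    ∃ θ : ↥(LinearMap.ker (Q.comp Q) ⊓ LinearMap.ker Q) →ₗ[ℂ]
        (AddMonoidAlgebra ℂ S ⧸ Submodule.restrictScalars ℂ J),
      Function.Surjective θ ∧
      LinearMap.ker θ = Submodule.comap (LinearMap.ker (Q.comp Q) ⊓ LinearMap.ker Q).subtype
        (Submodule.map Q (LinearMap.ker (Q.comp Q))) :=
  stmt10_general S c J hJc T hT Q hQ
end
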